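/- arXiv:2212.03591 — 5 statements merged into one kernel-verified Lean document; each statement's English description precedes it below -/
import Mathlib

section
/- Let G be a locally profinite group with an open compact pro-p subgroup, R a Z[1/p]-algebra, H ≤ G a closed subgroup, and K ≤ G an open compact pro-p subgroup. Let (g_j)_{j∈J} be a set of representatives for the double cosets K\G/H. Then there is an isomorphism of smooth R[H]-modules C_c^∞(K\G, R) ≅ ⊕_{j∈J} C_c^∞((g_j^{-1} K g_j ∩ H)\H, R), where H acts by right translation on both sides. -/
/-!
`G` is the disjoint union of the double cosets `K gⱼ H`, which are open because `K` is, and a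
left `K`-invariant function is determined by its restrictions `h ↦ f (gⱼ h)`. Conversely, a family
`Fⱼ` invariant under `gⱼ⁻¹ K gⱼ ∩ H` glues to a well-defined `K`-invariant `f`, since
`k₁ gⱼ h₁ = k₂ gⱼ h₂` forces `gⱼ h₁ h₂⁻¹ gⱼ⁻¹ ∈ K`; such an `f` is automatically locally constant.
Compact supports match because a compact set meets only finitely many of the disjoint open double
cosets, and conversely the support of the glued function lies in the finite union of the compact
sets `K gⱼ supp Fⱼ`.
-/

open Set Function DoubleCoset
open scoped Pointwise

theorem LocallyFinite.of_isOpen_of_pairwiseDisjoint {X ι : Type*} [TopologicalSpace X]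
    {U : ι → Set X} (hopen : ∀ i, IsOpen (U i)) (hdisj : Pairwise (Disjoint on U))
    (hcover : ∀ x, ∃ i, x ∈ U i) : LocallyFinite U := by
  intro x
  obtain ⟨i, hi⟩ := hcover x
  refine ⟨U i, (hopen i).mem_nhds hi, (finite_singleton i).subset ?_⟩
  rintro j ⟨y, hyj, hyi⟩
  by_contra hji
  exact (hdisj hji).le_bot ⟨hyj, hyi⟩

theorem IsLocallyConstant.isClosed_support {X R : Type*} [TopologicalSpace X] [Zero R]
    {f : X → R} (hf : IsLocallyConstant f) : IsClosed (support f) :=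
  (hf.isOpen_fiber 0).isClosed_compl

theorem IsLocallyConstant.hasCompactSupport_of_support_subset {X R : Type*} [TopologicalSpace X]
    [Zero R] {f : X → R} {S : Set X} (hf : IsLocallyConstant f) (hS : IsCompact S)
    (hfS : support f ⊆ S) : HasCompactSupport f :=
  HasCompactSupport.intro' (hS.of_isClosed_subset hf.isClosed_support hfS) hf.isClosed_support
    fun _ hx => notMem_support.1 hx

theorem IsLocallyConstant.of_mul_left_eq {G X : Type*} [Group G] [TopologicalSpace G]
    [ContinuousMul G] {K : Subgroup G} (hK : IsOpen (K : Set G)) {f : G → X}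
    (hf : ∀ k ∈ K, ∀ g, f (k * g) = f g) : IsLocallyConstant f := by
  rw [IsLocallyConstant.iff_exists_open]
  refine fun g => ⟨(· * g⁻¹) ⁻¹' K, hK.preimage (continuous_mul_const _), by simp [K.one_mem],
    fun y hy => ?_⟩
  simpa using hf _ hy g

namespace DoubleCoset

variable {G : Type*} [Group G]

theorem isOpen_doubleCoset [TopologicalSpace G] [ContinuousMul G] {s : Set G} (hs : IsOpen s)
    (a : G) (t : Set G) : IsOpen (doubleCoset a s t) :=
  hs.mul_right.mul_right

theorem isCompact_doubleCoset [TopologicalSpace G] [ContinuousMul G] {s t : Set G}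
    (hs : IsCompact s) (a : G) (ht : IsCompact t) : IsCompact (doubleCoset a s t) :=
  (hs.mul isCompact_singleton).mul ht

theorem conj_mul_inv_mem_of_mul_eq {K : Subgroup G} {a h₁ h₂ k₁ k₂ : G} (hk₁ : k₁ ∈ K)
    (hk₂ : k₂ ∈ K) (heq : k₁ * a * h₁ = k₂ * a * h₂) : a * (h₁ * h₂⁻¹) * a⁻¹ ∈ K := by
  have : a * (h₁ * h₂⁻¹) * a⁻¹ = k₁⁻¹ * k₂ := by
    rw [show h₁ = a⁻¹ * k₁⁻¹ * (k₂ * a * h₂) by rw [← heq]; group]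
    group
  exact this ▸ K.mul_mem (K.inv_mem hk₁) hk₂

end DoubleCoset

section Representatives

variable {G : Type*} [Group G] {K H : Subgroup G} {J : Type*} {gj : J → G} {R : Type*}
  {f : G → R} {F : J → H → R}

def restrictToReps (gj : J → G) (H : Subgroup G) (f : G → R) (j : J) (h : H) : R :=
  f (gj j * h)

theorem pairwise_disjoint_doubleCoset_reps
    (hrep : ∀ g, ∃! j, g ∈ doubleCoset (gj j) K H) :
    Pairwise (Disjoint on fun j => doubleCoset (gj j) (K : Set G) H) := by
  intro i j hij
  rw [Function.onFun, Set.disjoint_left]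
  intro g hi hj
  exact hij ((hrep g).unique hi hj)

theorem restrictToReps_mul_of_conj_mem (hf : ∀ k ∈ K, ∀ g, f (k * g) = f g) (j : J)
    {u : H} (hu : gj j * u * (gj j)⁻¹ ∈ K) (h : H) :
    restrictToReps gj H f j (u * h) = restrictToReps gj H f j h := by
  have := hf _ hu (gj j * h)
  simp only [restrictToReps, Subgroup.coe_mul]
  rwa [show gj j * (u * h) = gj j * u * (gj j)⁻¹ * (gj j * h) by group]

def IsExtensionAlongReps (K : Subgroup G) (gj : J → G) (f : G → R) (F : J → H → R) : Prop :=
  ∀ j, ∀ k ∈ K, ∀ h : H, f (k * gj j * h) = F j h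

theorem exists_isExtensionAlongReps (hrep : ∀ g, ∃! j, g ∈ doubleCoset (gj j) K H)
    (hF : ∀ j (u h : H), gj j * u * (gj j)⁻¹ ∈ K → F j (u * h) = F j h) :
    ∃ f : G → R, IsExtensionAlongReps K gj f F := by
  choose j hj using fun g => (hrep g).exists
  choose k hk h hh hg using fun g => mem_doubleCoset.1 (hj g)
  refine ⟨fun g => F (j g) ⟨h g, hh g⟩, fun i k' hk' h' => ?_⟩
  generalize hg' : k' * gj i * (h' : G) = g
  obtain rfl : j g = i := (hrep g).unique (hj g) (mem_doubleCoset.2 ⟨k', hk', h', h'.2, hg'.symm⟩)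
  have hconj := conj_mul_inv_mem_of_mul_eq (hk g) hk' ((hg g).symm.trans hg'.symm)
  simpa using hF (j g) (⟨h g, hh g⟩ * h'⁻¹) h' (by simpa using hconj)

theorem injOn_restrictToReps (hcover : ∀ g, ∃ j, g ∈ doubleCoset (gj j) K H) :
    InjOn (restrictToReps gj H) {f : G → R | ∀ k ∈ K, ∀ g, f (k * g) = f g} := by
  intro f hf f' hf' heq
  funext g
  obtain ⟨j, k, hk, h, hh, rfl⟩ := (hcover g).imp fun _ => mem_doubleCoset.1
  rw [mul_assoc, hf k hk, hf' k hk]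
  exact congrFun (congrFun heq j) ⟨h, hh⟩

theorem IsExtensionAlongReps.restrictToReps_eq (hf : IsExtensionAlongReps K gj f F) :
    restrictToReps gj H f = F := by
  funext j h
  simpa [restrictToReps] using hf j 1 K.one_mem h

theorem IsExtensionAlongReps.mul_left_eq (hf : IsExtensionAlongReps K gj f F)
    (hcover : ∀ g, ∃ j, g ∈ doubleCoset (gj j) K H) : ∀ k ∈ K, ∀ g, f (k * g) = f g := by
  intro k hk g
  obtain ⟨j, k', hk', h, hh, rfl⟩ := (hcover g).imp fun _ => mem_doubleCoset.1
  rw [← mul_assoc, ← mul_assoc, hf j _ (K.mul_mem hk hk') ⟨h, hh⟩, hf j _ hk' ⟨h, hh⟩]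

variable [TopologicalSpace G] [IsTopologicalGroup G]

theorem isLocallyConstant_restrictToReps (hf : IsLocallyConstant f) (j : J) :
    IsLocallyConstant (restrictToReps gj H f j) :=
  hf.comp_continuous (continuous_const.mul continuous_subtype_val)

theorem hasCompactSupport_restrictToReps [Zero R] (hf : HasCompactSupport f)
    (hH : IsClosed (H : Set G)) (j : J) : HasCompactSupport (restrictToReps gj H f j) :=
  hf.comp_isClosedEmbedding
    ((Homeomorph.mulLeft (gj j)).isClosedEmbedding.comp hH.isClosedEmbedding_subtypeVal)

theorem finite_setOf_restrictToReps_ne_zero [Zero R]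
    (hrep : ∀ g, ∃! j, g ∈ doubleCoset (gj j) K H) (hK : IsOpen (K : Set G))
    (hf : HasCompactSupport f) : {j | restrictToReps gj H f j ≠ 0}.Finite := by
  have hfin := (LocallyFinite.of_isOpen_of_pairwiseDisjoint (fun j => isOpen_doubleCoset hK _ _)
    (pairwise_disjoint_doubleCoset_reps hrep)
    fun g => (hrep g).exists).finite_nonempty_inter_compact hf
  refine hfin.subset fun j hj => ?_
  obtain ⟨h, hfh⟩ := Function.ne_iff.1 hj
  exact ⟨gj j * h, mem_doubleCoset.2 ⟨1, K.one_mem, h, h.2, by rw [one_mul]⟩,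
    subset_tsupport _ hfh⟩

theorem IsExtensionAlongReps.hasCompactSupport [Zero R] (hf : IsExtensionAlongReps K gj f F)
    (hcover : ∀ g, ∃ j, g ∈ doubleCoset (gj j) K H) (hflc : IsLocallyConstant f)
    (hKc : IsCompact (K : Set G)) (hF : ∀ j, HasCompactSupport (F j))
    (hfin : {j | F j ≠ 0}.Finite) : HasCompactSupport f := by
  refine hflc.hasCompactSupport_of_support_subset (hfin.isCompact_biUnion fun j _ =>
    isCompact_doubleCoset hKc (gj j) ((hF j).isCompact.image continuous_subtype_val)) ?_
  intro g hg
  obtain ⟨j, k, hk, h, hh, rfl⟩ := (hcover g).imp fun _ => mem_doubleCoset.1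
  have hFh : F j ⟨h, hh⟩ ≠ 0 := hf j k hk ⟨h, hh⟩ ▸ hg
  exact mem_biUnion (fun hFj => hFh (congrFun hFj _))
    (mem_doubleCoset.2 ⟨k, hk, h, ⟨⟨h, hh⟩, subset_tsupport _ hFh, rfl⟩, rfl⟩)

end Representatives

theorem stmt1_general
    (R : Type*) [CommRing R]
    (G : Type*) [Group G] [TopologicalSpace G] [IsTopologicalGroup G]
    (K : Subgroup G) (hKopen : IsOpen (K : Set G)) (hKcpt : IsCompact (K : Set G))
    (H : Subgroup G) (hH : IsClosed (H : Set G))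
    (J : Type*) (gj : J → G)
    -- `(g_j)` is a system of representatives for `K\G/H`:
    (hrep : ∀ g : G, ∃! j : J, ∃ k ∈ K, ∃ h ∈ H, g = k * gj j * h) :
    ∃ Φ : (G → R) → (J → (↥H → R)),
      -- `R`-linearity:
      (∀ f f' : G → R, Φ (f + f') = Φ f + Φ f') ∧
      (∀ (r : R) (f : G → R), Φ (r • f) = r • Φ f) ∧
      -- `H`-equivariance for right translation:
      (∀ (h₀ : ↥H) (f : G → R),
        Φ (fun g => f (g * (h₀ : G))) = fun j u => Φ f j (u * h₀)) ∧
      -- bijection from `C_c^∞(K\G, R)` onto the direct sum: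
      Set.BijOn Φ
        {f : G → R | (∀ k ∈ K, ∀ g : G, f (k * g) = f g) ∧
          IsLocallyConstant f ∧ HasCompactSupport f}
        {F : J → (↥H → R) |
          (∀ j : J, (∀ u h : ↥H, (gj j) * (u : G) * (gj j)⁻¹ ∈ K → F j (u * h) = F j h) ∧
            IsLocallyConstant (F j) ∧ HasCompactSupport (F j)) ∧
          {j : J | F j ≠ 0}.Finite} := by
  have hrep' : ∀ g, ∃! j, g ∈ doubleCoset (gj j) K H := by
    simpa only [mem_doubleCoset, SetLike.mem_coe] using hrep
  have hcover g := (hrep' g).exists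
  refine ⟨restrictToReps gj H, fun _ _ => rfl, fun _ _ => rfl, fun h₀ f => ?_, ?_, ?_, ?_⟩
  · funext j u
    simp only [restrictToReps, Subgroup.coe_mul, mul_assoc]
  · rintro f ⟨hfK, hflc, hfcs⟩
    exact ⟨fun j => ⟨fun _ _ hu => restrictToReps_mul_of_conj_mem hfK j hu _,
      isLocallyConstant_restrictToReps hflc j, hasCompactSupport_restrictToReps hfcs hH j⟩,
      finite_setOf_restrictToReps_ne_zero hrep' hKopen hfcs⟩
  · exact (injOn_restrictToReps hcover).mono fun f hf => hf.1
  · rintro F ⟨hF, hfin⟩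
    obtain ⟨f, hf⟩ := exists_isExtensionAlongReps hrep' fun j => (hF j).1
    have hfK := hf.mul_left_eq hcover
    have hflc := IsLocallyConstant.of_mul_left_eq hKopen hfK
    exact ⟨f, ⟨hfK, hflc, hf.hasCompactSupport hcover hflc hKcpt (fun j => (hF j).2.2) hfin⟩,
      hf.restrictToReps_eq⟩

/-- Let `G` be locally profinite, `R` a `ℤ[1/p]`-algebra, `H ≤ G` a closed
subgroup, `K ≤ G` an open compact pro-`p` subgroup, and `(g_j)_{j ∈ J}` a set of
representatives for the double cosets `K\G/H`.  Then the map
`f ↦ (j ↦ (h ↦ f (g_j h)))` defines an isomorphism of smooth `R[H]`-modules (for the right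
translation actions) `C_c^∞(K\G, R) ≅ ⊕_{j ∈ J} C_c^∞((g_j⁻¹ K g_j ∩ H)\H, R)`. -/
theorem stmt1 (p : ℕ) (hp : p.Prime)
    (R : Type*) [CommRing R] (hpu : IsUnit (p : R))
    (G : Type*) [Group G] [TopologicalSpace G] [IsTopologicalGroup G]
    (K : Subgroup G) (hKopen : IsOpen (K : Set G)) (hKcpt : IsCompact (K : Set G))
    (hKpro : ∀ U : Subgroup G, U ≤ K → IsOpen (U : Set G) → ∃ n : ℕ, U.relIndex K = p ^ n)
    (H : Subgroup G) (hH : IsClosed (H : Set G))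
    (J : Type*) (gj : J → G)
    -- `(g_j)` is a system of representatives for `K\G/H`:
    (hrep : ∀ g : G, ∃! j : J, ∃ k ∈ K, ∃ h ∈ H, g = k * gj j * h) :
    ∃ Φ : (G → R) → (J → (↥H → R)),
      -- `R`-linearity:
      (∀ f f' : G → R, Φ (f + f') = Φ f + Φ f') ∧
      (∀ (r : R) (f : G → R), Φ (r • f) = r • Φ f) ∧
      -- `H`-equivariance for right translation:
      (∀ (h₀ : ↥H) (f : G → R),
        Φ (fun g => f (g * (h₀ : G))) = fun j u => Φ f j (u * h₀)) ∧
      -- bijection from `C_c^∞(K\G, R)` onto the direct sum: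
      Set.BijOn Φ
        {f : G → R | (∀ k ∈ K, ∀ g : G, f (k * g) = f g) ∧
          IsLocallyConstant f ∧ HasCompactSupport f}
        {F : J → (↥H → R) |
          (∀ j : J, (∀ u h : ↥H, (gj j) * (u : G) * (gj j)⁻¹ ∈ K → F j (u * h) = F j h) ∧
            IsLocallyConstant (F j) ∧ HasCompactSupport (F j)) ∧
          {j : J | F j ≠ 0}.Finite} :=
  stmt1_general R G K hKopen hKcpt H hH J gj hrep
end

section
/- Let R be a Noetherian commutative ring, G a locally profinite group with open compact pro-p subgroups, and let V, W be smooth R[G]-modules such that V is finitely generated as an R[G]-module and W is admissible. Then the coinvariant module V ⊗_{R[G]} W is a finitely generated R-module. -/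
/-! Choose an open compact subgroup `K` of the pro-`p` subgroup fixing the finitely many
`R[G]`-generators `s` of `V`. Every `b (g s) w = b s (g⁻¹ w)`, so `Q` is spanned by the
`b s w`. If `w` is fixed by an open `K' ≤ K`, then the trace `tr_{K/K'} w` lies in `W^K` and
`b s (tr_{K/K'} w) = [K : K'] • b s w`; the index divides a power of `p`, hence is invertible
in `R`. So `Q` is spanned by the `b s (W^K)`, which are finitely generated by admissibility. -/

/-- The submodule of vectors fixed by a set `s` of group elements under a representation. -/
def fixedSubmodule {R G V : Type*} [CommRing R] [Group G] [AddCommGroup V] [Module R V]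
    (ρ : Representation R G V) (s : Set G) : Submodule R V where
  carrier := {v | ∀ k ∈ s, ρ k v = v}
  add_mem' := by
    intro a b ha hb k hk
    rw [map_add, ha k hk, hb k hk]
  zero_mem' := by
    intro k _
    exact map_zero _
  smul_mem' := by
    intro c v hv k hk
    rw [map_smul, hv k hk]

namespace Representation

variable {R G W M : Type*} [CommRing R] [Group G] [AddCommGroup W] [Module R W]
  [AddCommGroup M] [Module R M]

theorem apply_eq_of_mk_eq {σ : Representation R G W} {K K' : Subgroup G} {w : W}
    (hw : ∀ k ∈ K', σ k w = w) {x y : K} (hxy : (x : K ⧸ K'.subgroupOf K) = y) :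
    σ (x : G) w = σ (y : G) w := by
  have hmem : (x : G)⁻¹ * y ∈ K' := Subgroup.mem_subgroupOf.mp (QuotientGroup.eq.mp hxy)
  rw [← mul_inv_cancel_left (x : G) y, map_mul, Module.End.mul_apply, hw _ hmem]

variable (σ : Representation R G W) (K K' : Subgroup G) [Fintype (K ⧸ K'.subgroupOf K)]

/-- The trace `tr_{K/K'}`. -/
noncomputable def cosetTrace (w : W) : W :=
  ∑ c : K ⧸ K'.subgroupOf K, σ (c.out : G) w

variable {σ K K'}

theorem cosetTrace_mem_fixedSubmodule {w : W} (hw : ∀ k ∈ K', σ k w = w) :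
    σ.cosetTrace K K' w ∈ fixedSubmodule σ (K : Set G) := by
  intro k hk
  have htranslate : ∀ c : K ⧸ K'.subgroupOf K,
      σ k (σ (c.out : G) w) = σ (((⟨k, hk⟩ : K) • c : K ⧸ K'.subgroupOf K).out : G) w := by
    intro c
    rw [← Module.End.mul_apply, ← map_mul]
    refine apply_eq_of_mk_eq (x := (⟨k, hk⟩ : K) * c.out) hw ?_
    rw [QuotientGroup.out_eq']
    exact congrArg ((⟨k, hk⟩ : K) • ·) (QuotientGroup.out_eq' c)
  rw [cosetTrace, map_sum, Finset.sum_congr rfl fun c _ => htranslate c]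
  exact Equiv.sum_comp (MulAction.toPerm (⟨k, hk⟩ : K))
    fun c : K ⧸ K'.subgroupOf K => σ (c.out : G) w

theorem map_cosetTrace (φ : W →ₗ[R] M) (hφ : ∀ k ∈ K, ∀ w, φ (σ k w) = φ w) (w : W) :
    φ (σ.cosetTrace K K' w) = K'.relIndex K • φ w := by
  simp only [cosetTrace, map_sum, fun c : K ⧸ K'.subgroupOf K => hφ _ (c.out).2 w,
    Finset.sum_const, Finset.card_univ, ← Nat.card_eq_fintype_card]
  rfl

end Representation

section Smooth

variable {R G V W M : Type*} [CommRing R] [Group G] [TopologicalSpace G]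
  [AddCommGroup V] [Module R V] [AddCommGroup W] [Module R W] [AddCommGroup M] [Module R M]

theorem exists_isOpen_forall_apply_eq (ρ : Representation R G V)
    (hsmooth : ∀ v : V, ∃ U : Subgroup G, IsOpen (U : Set G) ∧ ∀ k ∈ U, ρ k v = v)
    (S : Finset V) : ∃ U : Subgroup G, IsOpen (U : Set G) ∧ ∀ s ∈ S, ∀ k ∈ U, ρ k s = s := by
  classical
  induction S using Finset.induction_on with
  | empty => exact ⟨⊤, by simp, by simp⟩
  | insert v S _ ih =>
    obtain ⟨U, hUo, hU⟩ := ih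
    obtain ⟨U', hU'o, hU'⟩ := hsmooth v
    refine ⟨U ⊓ U', hUo.inter hU'o, ?_⟩
    rintro s hs k ⟨hkU, hkU'⟩
    rcases Finset.mem_insert.mp hs with rfl | hs
    exacts [hU' k hkU', hU s hs k hkU]

theorem isUnit_relIndex_of_le {p : ℕ} (hpu : IsUnit (p : R)) {K₀ K U : Subgroup G}
    (hK₀ : ∀ U : Subgroup G, U ≤ K₀ → IsOpen (U : Set G) → ∃ n : ℕ, U.relIndex K₀ = p ^ n)
    (hKK₀ : K ≤ K₀) (hUK : U ≤ K) (hU : IsOpen (U : Set G)) : IsUnit (U.relIndex K : R) := by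
  obtain ⟨n, hn⟩ := hK₀ U (hUK.trans hKK₀) hU
  have hdvd : U.relIndex K ∣ p ^ n :=
    hn ▸ Dvd.intro _ (Subgroup.relIndex_mul_relIndex U K K₀ hUK hKK₀)
  exact isUnit_of_dvd_unit (by exact_mod_cast Nat.cast_dvd_cast hdvd) (hpu.pow n)

theorem map_fixedSubmodule_eq_range [IsTopologicalGroup G] (σ : Representation R G W)
    {K : Subgroup G} (hKo : IsOpen (K : Set G)) (hKc : IsCompact (K : Set G))
    (hunit : ∀ U : Subgroup G, U ≤ K → IsOpen (U : Set G) → IsUnit (U.relIndex K : R))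
    (hsmooth : ∀ w : W, ∃ U : Subgroup G, IsOpen (U : Set G) ∧ ∀ k ∈ U, σ k w = w)
    (φ : W →ₗ[R] M) (hφ : ∀ k ∈ K, ∀ w, φ (σ k w) = φ w) :
    (fixedSubmodule σ (K : Set G)).map φ = LinearMap.range φ := by
  refine le_antisymm LinearMap.map_le_range ?_
  rintro _ ⟨w, rfl⟩
  obtain ⟨U, hUo, hUw⟩ := hsmooth w
  have hKUo : IsOpen ((K ⊓ U : Subgroup G) : Set G) := hKo.inter hUo
  have : CompactSpace K := isCompact_iff_compactSpace.mp hKc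
  have : Finite (K ⧸ (K ⊓ U).subgroupOf K) :=
    Subgroup.quotient_finite_of_isOpen _ (Subgroup.subgroupOf_isOpen K _ hKUo)
  have := Fintype.ofFinite (K ⧸ (K ⊓ U).subgroupOf K)
  obtain ⟨u, hu⟩ := hunit (K ⊓ U) inf_le_left hKUo
  have hw : φ w = φ (((u⁻¹ : Rˣ) : R) • σ.cosetTrace K (K ⊓ U) w) := by
    rw [map_smul, σ.map_cosetTrace φ hφ, ← Nat.cast_smul_eq_nsmul R, ← hu, smul_smul,
      Units.inv_mul, one_smul]
  rw [hw]
  exact Submodule.mem_map_of_mem <| Submodule.smul_mem _ _ <|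
    Representation.cosetTrace_mem_fixedSubmodule fun k hk => hUw k hk.2

end Smooth

theorem apply_mem_iSup_range_of_span_eq_top {R G V W M : Type*} [CommRing R] [Group G]
    [AddCommGroup V] [Module R V] [AddCommGroup W] [Module R W] [AddCommGroup M] [Module R M]
    {ρ : Representation R G V} {σ : Representation R G W} {b : V →ₗ[R] W →ₗ[R] M}
    (hinv : ∀ (g : G) (v : V) (w : W), b (ρ g v) (σ g w) = b v w) {S : Finset V}
    (hS : Submodule.span R {v : V | ∃ g : G, ∃ s ∈ S, v = ρ g s} = ⊤) (v : V) (w : W) :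
    b v w ∈ ⨆ s ∈ S, LinearMap.range (b s) := by
  have hv : v ∈ Submodule.span R {v : V | ∃ g : G, ∃ s ∈ S, v = ρ g s} := hS ▸ trivial
  induction hv using Submodule.span_induction with
  | mem x hx =>
    obtain ⟨g, s, hs, rfl⟩ := hx
    rw [← σ.self_inv_apply g w, hinv]
    exact (le_iSup₂ (f := fun s _ => LinearMap.range (b s)) s hs) ⟨_, rfl⟩
  | zero => simp only [map_zero, LinearMap.zero_apply, Submodule.zero_mem]
  | add x y _ _ hx hy =>
    rw [map_add, LinearMap.add_apply]
    exact Submodule.add_mem _ hx hy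
  | smul r x _ hx =>
    rw [map_smul, LinearMap.smul_apply]
    exact Submodule.smul_mem _ r hx

/-- The coinvariants `V ⊗_{R[G]} W` are encoded by their universal property: `Q` is any
`R`-module spanned by the image of a `G`-invariant bilinear map `V × W → Q`. -/
theorem stmt4_general (p : ℕ)
    (R : Type*) [CommRing R] (hpu : IsUnit (p : R))
    (G : Type*) [Group G] [TopologicalSpace G] [IsTopologicalGroup G]
    (hG : ∃ K : Subgroup G, IsOpen (K : Set G) ∧ IsCompact (K : Set G) ∧
      ∀ U : Subgroup G, U ≤ K → IsOpen (U : Set G) → ∃ n : ℕ, U.relIndex K = p ^ n)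
    (V : Type*) [AddCommGroup V] [Module R V] (ρ : Representation R G V)
    (W : Type*) [AddCommGroup W] [Module R W] (σ : Representation R G W)
    (hVsm : ∀ v : V, ∃ K : Subgroup G, IsOpen (K : Set G) ∧ IsCompact (K : Set G) ∧
      ∀ k ∈ K, ρ k v = v)
    (hWsm : ∀ w : W, ∃ K : Subgroup G, IsOpen (K : Set G) ∧ IsCompact (K : Set G) ∧
      ∀ k ∈ K, σ k w = w)
    -- `V` is finitely generated as an `R[G]`-module:
    (hVfg : ∃ S : Finset V,
      Submodule.span R {v : V | ∃ (g : G), ∃ s ∈ S, v = ρ g s} = ⊤)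
    -- `W` is admissible: for each open compact `K ≤ G` the invariants `W^K` are f.g. over `R`:
    (hWadm : ∀ K : Subgroup G, IsOpen (K : Set G) → IsCompact (K : Set G) →
      (fixedSubmodule σ (K : Set G)).FG)
    (Q : Type*) [AddCommGroup Q] [Module R Q]
    (b : V →ₗ[R] W →ₗ[R] Q)
    (hinv : ∀ (g : G) (v : V) (w : W), b (ρ g v) (σ g w) = b v w)
    (hspan : Submodule.span R {q : Q | ∃ (v : V) (w : W), q = b v w} = ⊤) :
    Module.Finite R Q := by
  obtain ⟨K₀, hK₀o, hK₀c, hK₀p⟩ := hG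
  obtain ⟨S, hS⟩ := hVfg
  obtain ⟨U, hUo, hUS⟩ :=
    exists_isOpen_forall_apply_eq ρ (fun v => (hVsm v).imp fun _ h => ⟨h.1, h.2.2⟩) S
  set K := K₀ ⊓ U
  have hKo : IsOpen (K : Set G) := hK₀o.inter hUo
  have hKc : IsCompact (K : Set G) :=
    hK₀c.of_isClosed_subset (K.isClosed_of_isOpen hKo) inf_le_left
  have hrange (s) (hs : s ∈ S) :
      (fixedSubmodule σ (K : Set G)).map (b s) = LinearMap.range (b s) :=
    map_fixedSubmodule_eq_range σ hKo hKc
      (fun _ hU'K hU'o => isUnit_relIndex_of_le hpu hK₀p inf_le_left hU'K hU'o)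
      (fun w => (hWsm w).imp fun _ h => ⟨h.1, h.2.2⟩) (b s)
      (fun k hk w => by rw [← hinv k s w, hUS s hs k hk.2])
  have hfg : (⨆ s ∈ S, LinearMap.range (b s)).FG :=
    Submodule.fg_biSup S _ fun s hs => hrange s hs ▸ (hWadm K hKo hKc).map (b s)
  have htop : ⨆ s ∈ S, LinearMap.range (b s) = ⊤ := by
    refine top_unique (hspan ▸ Submodule.span_le.mpr ?_)
    rintro _ ⟨v, w, rfl⟩
    exact apply_mem_iSup_range_of_span_eq_top hinv hS v w
  exact ⟨htop ▸ hfg⟩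

/-- Let `R` be Noetherian, `G` locally profinite with an open compact pro-`p`
subgroup (`p` invertible in `R`), `V` a smooth `R[G]`-module which is finitely generated as an
`R[G]`-module, and `W` an admissible smooth `R[G]`-module.  Then the coinvariants
`V ⊗_{R[G]} W` form a finitely generated `R`-module.  (The coinvariants are encoded via their
universal property: any `R`-module `Q` spanned by the image of a `G`-invariant bilinear map
`V × W → Q` is a quotient of `V ⊗_{R[G]} W`, and `V ⊗_{R[G]} W` itself is such a `Q`; the
conclusion asserts finite generation of every such `Q`.) -/
theorem stmt4 (p : ℕ) (hp : p.Prime)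
    (R : Type*) [CommRing R] [IsNoetherianRing R] (hpu : IsUnit (p : R))
    (G : Type*) [Group G] [TopologicalSpace G] [IsTopologicalGroup G]
    (hG : ∃ K : Subgroup G, IsOpen (K : Set G) ∧ IsCompact (K : Set G) ∧
      ∀ U : Subgroup G, U ≤ K → IsOpen (U : Set G) → ∃ n : ℕ, U.relIndex K = p ^ n)
    (V : Type*) [AddCommGroup V] [Module R V] (ρ : Representation R G V)
    (W : Type*) [AddCommGroup W] [Module R W] (σ : Representation R G W)
    (hVsm : ∀ v : V, ∃ K : Subgroup G, IsOpen (K : Set G) ∧ IsCompact (K : Set G) ∧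
      ∀ k ∈ K, ρ k v = v)
    (hWsm : ∀ w : W, ∃ K : Subgroup G, IsOpen (K : Set G) ∧ IsCompact (K : Set G) ∧
      ∀ k ∈ K, σ k w = w)
    -- `V` is finitely generated as an `R[G]`-module:
    (hVfg : ∃ S : Finset V,
      Submodule.span R {v : V | ∃ (g : G), ∃ s ∈ S, v = ρ g s} = ⊤)
    -- `W` is admissible: for each open compact `K ≤ G` the invariants `W^K` are f.g. over `R`:
    (hWadm : ∀ K : Subgroup G, IsOpen (K : Set G) → IsCompact (K : Set G) →
      (fixedSubmodule σ (K : Set G)).FG)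
    (Q : Type*) [AddCommGroup Q] [Module R Q]
    (b : V →ₗ[R] W →ₗ[R] Q)
    (hinv : ∀ (g : G) (v : V) (w : W), b (ρ g v) (σ g w) = b v w)
    (hspan : Submodule.span R {q : Q | ∃ (v : V) (w : W), q = b v w} = ⊤) :
    Module.Finite R Q :=
  stmt4_general p R hpu G hG V ρ W σ hVsm hWsm hVfg hWadm Q b hinv hspan
end

section
/- Let n = n_1 + n_2 with n_1, n_2 ≥ 1, and let λ : n = λ_1 + ⋯ + λ_k be an ordered partition of n with λ ≠ (n) and λ ≠ (n_1, n_2). Let Sp_m denote the m-dimensional Weil–Deligne representation with r(Art(x)) e_i = |x|^{(m+1−2i)/2} e_i and N e_i = e_{i−1}, and let ρ = rec(π_{n_1,n_2}) be the n-dimensional Weil–Deligne representation which is the direct sum of Sp_{n_1}(|·|^{(n+1)/2−(n_1+1)/2}) and Sp_{n_2}(|·|^{(n+1)/2−n_1−(n_2+1)/2}). Then there exists an ordered list of characters χ_1 ⊗ ⋯ ⊗ χ_n occurring in the Jacquet module of π_λ such that there is no increasing filtration 0 ⊂ Fil_1 ⊂ ⋯ ⊂ Fil_n = C^n by Weil–Deligne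 subrepresentations of ρ with Fil_i/Fil_{i−1} ≅ C(χ_i) for each i. -/
/-
The witness lists the blocks of `λ` in reverse order, each block in increasing order, so its
first exponent is `(n-1)/2 - (λ_1 + ⋯ + λ_{k-1})` and its last is `(n-1)/2 - (λ_1 - 1)`.
In a filtration of `ρ = rec(π_{n₁,n₂})` with these graded pieces, `Fil_1` is an `N`-killed
eigenline of the semisimple part, hence spanned by `e_0` or `e_{n₁}`, and `Fil_{n-1}` is a
hyperplane stable under the semisimple part and containing the image of `N`, hence the span of
all `e_j` except `e_{n₁-1}` or `e_{n-1}`. The first forces `λ_1 + ⋯ + λ_{k-1} = n₁`, the second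
then `λ_1 = n₁`, i.e. `λ = (n₁, n₂)`.
-/

/-- The (additively encoded) Frobenius-semisimple part of `rec(π_{n₁,n₂})`: the diagonal
operator on `ℂ^n` with eigenvalue the exponent `(n-1)/2 - j` on the `j`-th basis vector
(the Weil group acts on the `j`-th line through the character `|·|^{(n-1)/2 - j}`, and
a line or subspace is Weil-stable iff it is stable under this diagonal operator). -/
noncomputable def Dop (n : ℕ) : (Fin n → ℂ) →ₗ[ℂ] (Fin n → ℂ) where
  toFun f := fun j => ((((n : ℂ) - 1) / 2) - ((j : ℕ) : ℂ)) * f j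
  map_add' f g := by funext j; simp [mul_add]
  map_smul' c f := by funext j; simp; ring

/-- The monodromy operator `N` of `rec(π_{n₁,n₂}) = Sp_{n₁}(…) ⊕ Sp_{n₂}(…)`:
`N e_j = e_{j-1}` within each of the two Jordan blocks `{0,…,n₁-1}`, `{n₁,…,n-1}`
(so `N e_0 = N e_{n₁} = 0`). -/
noncomputable def Nop (n n1 : ℕ) : (Fin n → ℂ) →ₗ[ℂ] (Fin n → ℂ) where
  toFun f := fun j =>
    if h : (j : ℕ) + 1 < n then (if (j : ℕ) + 1 = n1 then 0 else f ⟨(j : ℕ) + 1, h⟩) else 0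
  map_add' f g := by funext j; dsimp; split_ifs <;> simp
  map_smul' c f := by funext j; dsimp; split_ifs <;> simp

namespace Composition

section

variable {n : ℕ} (c : Composition n)

theorem sizeUpTo_lt_sizeUpTo {i j : ℕ} (hij : i < j) (hj : j ≤ c.length) :
    c.sizeUpTo i < c.sizeUpTo j := by
  have hle : c.sizeUpTo i ≤ c.sizeUpTo (j - 1) := c.monotone_sizeUpTo (by omega)
  have hlt := c.sizeUpTo_strict_mono (i := j - 1) (by omega)
  rw [Nat.sub_add_cancel (by omega)] at hlt
  exact hle.trans_lt hlt

theorem sizeUpTo_index_le_and_lt (v : Fin n) :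
    c.sizeUpTo (c.index v) ≤ v ∧ (v : ℕ) < c.sizeUpTo (c.index v + 1) :=
  ⟨c.sizeUpTo_index_le v, c.lt_sizeUpTo_index_succ v⟩

theorem index_eq_of_sizeUpTo_le {v : Fin n} {t : Fin c.length} (h₁ : c.sizeUpTo t ≤ v)
    (h₂ : (v : ℕ) < c.sizeUpTo (t + 1)) : c.index v = t := by
  obtain ⟨j, rfl⟩ := c.mem_range_embedding_iff.2 ⟨h₁, h₂⟩
  exact c.index_embedding t j

/-- The position of `v` once the blocks of `c` are listed in reverse order, each block
keeping its increasing order. -/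
def reverseBlocksFun (v : Fin n) : Fin n :=
  ⟨n - c.sizeUpTo (c.index v + 1) + (v - c.sizeUpTo (c.index v)), by
    have := c.sizeUpTo_index_le_and_lt v
    have := c.sizeUpTo_le (c.index v + 1)
    omega⟩

theorem reverseBlocksFun_val {v : Fin n} {t : Fin c.length} (h₁ : c.sizeUpTo t ≤ v)
    (h₂ : (v : ℕ) < c.sizeUpTo (t + 1)) :
    (c.reverseBlocksFun v : ℕ) = n - c.sizeUpTo (t + 1) + (v - c.sizeUpTo t) := by
  simp only [reverseBlocksFun, c.index_eq_of_sizeUpTo_le h₁ h₂]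

theorem reverseBlocksFun_injective : Function.Injective c.reverseBlocksFun := by
  have key : ∀ v w : Fin n, c.index v < c.index w →
      (c.reverseBlocksFun w : ℕ) < c.reverseBlocksFun v := by
    intro v w hvw
    obtain ⟨hv₁, hv₂⟩ := c.sizeUpTo_index_le_and_lt v
    obtain ⟨hw₁, hw₂⟩ := c.sizeUpTo_index_le_and_lt w
    have hmono : c.sizeUpTo (c.index v + 1) ≤ c.sizeUpTo (c.index w) :=
      c.monotone_sizeUpTo (by omega)
    have := c.sizeUpTo_le (c.index v + 1)
    rw [c.reverseBlocksFun_val hv₁ hv₂, c.reverseBlocksFun_val hw₁ hw₂]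
    omega
  intro v w hvw
  rcases lt_trichotomy (c.index v) (c.index w) with h | h | h
  · exact absurd (congrArg Fin.val hvw) (key v w h).ne'
  · obtain ⟨hv₁, hv₂⟩ := c.sizeUpTo_index_le_and_lt v
    obtain ⟨hw₁, hw₂⟩ := c.sizeUpTo_index_le_and_lt w
    rw [← h] at hw₁ hw₂
    have hval := congrArg Fin.val hvw
    rw [c.reverseBlocksFun_val hv₁ hv₂, c.reverseBlocksFun_val hw₁ hw₂] at hval
    have := c.sizeUpTo_le (c.index v + 1)
    exact Fin.ext (by omega)
  · exact absurd (congrArg Fin.val hvw) (key w v h).ne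

noncomputable def reverseBlocks : Equiv.Perm (Fin n) :=
  Equiv.ofBijective _ (Finite.injective_iff_bijective.mp c.reverseBlocksFun_injective)

theorem reverseBlocks_val {v : Fin n} {t : Fin c.length} (h₁ : c.sizeUpTo t ≤ v)
    (h₂ : (v : ℕ) < c.sizeUpTo (t + 1)) :
    (c.reverseBlocks v : ℕ) = n - c.sizeUpTo (t + 1) + (v - c.sizeUpTo t) :=
  c.reverseBlocksFun_val h₁ h₂

theorem reverseBlocks_lt_succ_iff (v : Fin n) (hv : (v : ℕ) + 1 < n) :
    c.reverseBlocks v < c.reverseBlocks ⟨v + 1, hv⟩ ↔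
      ∀ t < c.length, c.sizeUpTo (t + 1) ≠ v + 1 := by
  obtain ⟨h₁, h₂⟩ := c.sizeUpTo_index_le_and_lt v
  set t := c.index v
  have hle := c.sizeUpTo_le (t + 1)
  rw [Fin.lt_def, c.reverseBlocks_val h₁ h₂]
  by_cases hb : c.sizeUpTo (t + 1) = v + 1
  -- `v + 1` opens the next block, which is placed right before the block of `v`.
  · have ht : (t : ℕ) + 1 < c.length := by
      by_contra! h
      rw [c.sizeUpTo_ofLength_le _ h] at hb
      omega
    have hnext := c.sizeUpTo_strict_mono ht
    have hle' := c.sizeUpTo_le (t + 1 + 1)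
    rw [c.reverseBlocks_val (t := ⟨t + 1, ht⟩) hb.le (by simp only; omega)]
    exact iff_of_false (by simp only; omega) (fun h => h t t.2 hb)
  · rw [c.reverseBlocks_val (v := ⟨v + 1, hv⟩) (t := t) (by simp only; omega)
      (by simp only; omega)]
    refine iff_of_true (by simp only; omega) (fun s _ hs => ?_)
    rcases lt_or_ge s t with hst | hst
    · have := c.monotone_sizeUpTo (show s + 1 ≤ t by omega)
      omega
    · have := c.monotone_sizeUpTo (show t + 1 ≤ s + 1 by omega)
      omega

theorem reverseBlocks_eq_zero {v : Fin n} (hv : (v : ℕ) = c.sizeUpTo (c.length - 1)) :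
    (c.reverseBlocks v : ℕ) = 0 := by
  have hlen : 0 < c.length := c.length_pos_of_pos v.pos
  have hlast : c.length - 1 + 1 = c.length := Nat.sub_add_cancel hlen
  rw [c.reverseBlocks_val (t := ⟨c.length - 1, by omega⟩) hv.ge (by simp [hlast])]
  simp [hlast, hv]

theorem reverseBlocks_eq_last {v : Fin n} (hv : (v : ℕ) + 1 = c.sizeUpTo 1) :
    (c.reverseBlocks v : ℕ) = n - 1 := by
  have hlen : 0 < c.length := c.length_pos_of_pos v.pos
  rw [c.reverseBlocks_val (t := ⟨0, hlen⟩) (by simp) (by simp only [zero_add]; omega)]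
  have := c.sizeUpTo_le 1
  simp only [sizeUpTo_zero, zero_add, Nat.sub_zero]
  omega

end

section

variable {k n : ℕ} (lam : Fin k → ℕ) (hpos : ∀ t, 0 < lam t) (hsum : ∑ t, lam t = n)

def ofFn : Composition n where
  blocks := List.ofFn lam
  blocks_pos hi := by
    obtain ⟨t, rfl⟩ := List.mem_ofFn.mp hi
    exact hpos t
  blocks_sum := by rw [List.sum_ofFn, hsum]

theorem ofFn_length : (ofFn lam hpos hsum).length = k :=
  List.length_ofFn

theorem sizeUpTo_ofFn_succ (t : Fin k) :
    (ofFn lam hpos hsum).sizeUpTo (t + 1) = ∑ s ∈ Finset.univ.filter (· ≤ t), lam s := by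
  rw [sizeUpTo, ofFn, List.sum_take_ofFn]
  refine Finset.sum_congr (Finset.filter_congr fun s _ => ?_) fun _ _ => rfl
  rw [Fin.le_def]
  omega

end

end Composition

def HasGradedFiltration (n n1 : ℕ) (χ : Fin n → ℂ) : Prop :=
  ∃ Fil : Fin (n + 1) → Submodule ℂ (Fin n → ℂ),
    Monotone Fil ∧ Fil 0 = ⊥ ∧ Fil (Fin.last n) = ⊤ ∧
    (∀ i : Fin (n + 1), Module.finrank ℂ ↥(Fil i) = (i : ℕ)) ∧
    (∀ (i : Fin n) (v : Fin n → ℂ), v ∈ Fil i.succ →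
      (Dop n v - χ i • v ∈ Fil i.castSucc ∧ Nop n n1 v ∈ Fil i.castSucc))

theorem Dop_apply (n : ℕ) (f : Fin n → ℂ) (j : Fin n) :
    Dop n f j = (((n : ℂ) - 1) / 2 - (j : ℕ)) * f j :=
  rfl

theorem Dop_single (n : ℕ) (j : Fin n) (c : ℂ) :
    Dop n (Pi.single j c) = (((n : ℂ) - 1) / 2 - (j : ℕ)) • Pi.single j c := by
  ext i
  rcases eq_or_ne i j with rfl | h
  · simp [Dop_apply]
  · simp [Dop_apply, h]

theorem Nop_apply_of_succ_ne (n n1 : ℕ) (f : Fin n → ℂ) {j : Fin n} (h : (j : ℕ) + 1 < n)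
    (hj : (j : ℕ) + 1 ≠ n1) : Nop n n1 f j = f ⟨j + 1, h⟩ := by
  simp [Nop, h, hj]

theorem Nop_single_succ (n n1 : ℕ) {j : Fin n} (h : (j : ℕ) + 1 < n) (hj : (j : ℕ) + 1 ≠ n1)
    (c : ℂ) : Nop n n1 (Pi.single ⟨j + 1, h⟩ c) = Pi.single j c := by
  ext i
  simp only [Nop, LinearMap.coe_mk, AddHom.coe_mk, Pi.single_apply, Fin.ext_iff]
  split_ifs <;> first | rfl | omega

namespace HasGradedFiltration

variable {n n1 : ℕ} {χ : Fin n → ℂ}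

theorem first_eq_zero_or_eq (hF : HasGradedFiltration n n1 χ) (j : Fin n)
    (hχ : χ ⟨0, j.pos⟩ = ((n : ℂ) - 1) / 2 - (j : ℕ)) : (j : ℕ) = 0 ∨ (j : ℕ) = n1 := by
  obtain ⟨Fil, -, hbot, -, hrank, hstep⟩ := hF
  set i₀ : Fin n := ⟨0, j.pos⟩
  have hne : Fil i₀.succ ≠ ⊥ := by
    intro h
    have h₁ := hrank i₀.succ
    rw [h, finrank_bot, Fin.val_succ] at h₁
    omega
  obtain ⟨v, hv, hv0⟩ := (Submodule.ne_bot_iff _).mp hne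
  obtain ⟨hD, hN⟩ := hstep i₀ v hv
  rw [show i₀.castSucc = 0 from rfl, hbot, Submodule.mem_bot] at hD hN
  by_contra! hj
  have hsupp : ∀ i ≠ j, v i = 0 := by
    intro i hi
    have hDi := congrFun hD i
    rw [Pi.sub_apply, Pi.smul_apply, Dop_apply, hχ, smul_eq_mul, Pi.zero_apply] at hDi
    have hji : ((j : ℕ) : ℂ) - (i : ℕ) ≠ 0 :=
      sub_ne_zero.mpr (Nat.cast_injective.ne (Fin.val_injective.ne hi.symm))
    exact (mul_eq_zero.mp (by linear_combination hDi : (((j : ℕ) : ℂ) - (i : ℕ)) * v i = 0)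
      ).resolve_left hji
  have hvj : v j = 0 := by
    have hNj := congrFun hN ⟨j - 1, by omega⟩
    rw [Nop_apply_of_succ_ne n n1 v (by simp only; omega) (by simp only; omega),
      Pi.zero_apply] at hNj
    convert hNj using 2
    ext
    simp only
    omega
  refine hv0 (funext fun i => ?_)
  rcases eq_or_ne i j with rfl | hi
  · exact hvj
  · exact hsupp i hi

theorem last_succ_eq_or_eq (hF : HasGradedFiltration n n1 χ) (j : Fin n)
    (hχ : χ ⟨n - 1, Nat.sub_lt j.pos one_pos⟩ = ((n : ℂ) - 1) / 2 - (j : ℕ)) :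
    (j : ℕ) + 1 = n1 ∨ (j : ℕ) + 1 = n := by
  obtain ⟨Fil, -, -, htop, hrank, hstep⟩ := hF
  set i₁ : Fin n := ⟨n - 1, Nat.sub_lt j.pos one_pos⟩
  set W := Fil i₁.castSucc
  have hW : ∀ v, Dop n v - χ i₁ • v ∈ W ∧ Nop n n1 v ∈ W := fun v =>
    hstep i₁ v <| by
      rw [show i₁.succ = Fin.last n from Fin.ext (Nat.sub_add_cancel j.pos), htop]
      trivial
  by_contra! hj
  have hsingle : ∀ i, Pi.single i (1 : ℂ) ∈ W := by
    intro i
    rcases eq_or_ne i j with rfl | hi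
    · have hlt : (i : ℕ) + 1 < n := by omega
      simpa [Nop_single_succ n n1 hlt hj.1] using (hW (Pi.single ⟨i + 1, hlt⟩ 1)).2
    · have hD := (hW (Pi.single i 1)).1
      rw [Dop_single, hχ, ← sub_smul, sub_sub_sub_cancel_left] at hD
      have hji : ((j : ℕ) : ℂ) - (i : ℕ) ≠ 0 :=
        sub_ne_zero.mpr (Nat.cast_injective.ne (Fin.val_injective.ne hi.symm))
      exact (W.smul_mem_iff hji).mp hD
  have hW_top : W = ⊤ := by
    rw [eq_top_iff, ← (Pi.basisFun ℂ (Fin n)).span_eq, Submodule.span_le]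
    rintro _ ⟨i, rfl⟩
    simpa using hsingle i
  have hrank₁ : Module.finrank ℂ W = n - 1 := hrank i₁.castSucc
  rw [hW_top, finrank_top, Module.finrank_fin_fun] at hrank₁
  omega

end HasGradedFiltration

theorem not_hasGradedFiltration_reverseBlocks {n n1 : ℕ} (c : Composition n)
    (hlen : 2 ≤ c.length) (hc : ¬ (c.length = 2 ∧ c.sizeUpTo 1 = n1)) :
    ¬ HasGradedFiltration n n1 (fun i => ((n : ℂ) - 1) / 2 - (c.reverseBlocks.symm i : ℕ)) := by
  intro hF
  have hfirst_pos : 0 < c.sizeUpTo 1 := by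
    simpa using c.sizeUpTo_lt_sizeUpTo (i := 0) (j := 1) one_pos (by omega)
  have hfirst_le : c.sizeUpTo 1 ≤ c.sizeUpTo (c.length - 1) :=
    c.monotone_sizeUpTo (by omega)
  have hlast_lt : c.sizeUpTo (c.length - 1) < n := by
    simpa using c.sizeUpTo_lt_sizeUpTo (i := c.length - 1) (j := c.length) (by omega) le_rfl
  set v₀ : Fin n := ⟨c.sizeUpTo (c.length - 1), hlast_lt⟩
  set v₁ : Fin n := ⟨c.sizeUpTo 1 - 1, by omega⟩
  have hv₀ : c.reverseBlocks.symm ⟨0, v₀.pos⟩ = v₀ :=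
    (Equiv.symm_apply_eq _).mpr (Fin.ext (c.reverseBlocks_eq_zero rfl).symm)
  have hv₁ : c.reverseBlocks.symm ⟨n - 1, Nat.sub_lt v₁.pos one_pos⟩ = v₁ :=
    (Equiv.symm_apply_eq _).mpr
      (Fin.ext (c.reverseBlocks_eq_last (by simp only [v₁]; omega)).symm)
  have h₀ := hF.first_eq_zero_or_eq v₀ (by simp only [hv₀])
  have h₁ := hF.last_succ_eq_or_eq v₁ (by simp only [hv₁])
  simp only [v₀, v₁] at h₀ h₁
  have hlen2 : c.length = 2 := by
    by_contra h
    have := c.sizeUpTo_lt_sizeUpTo (i := 1) (j := c.length - 1) (by omega) (by omega)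
    omega
  exact hc ⟨hlen2, by omega⟩

theorem stmt8_general (n n1 n2 k : ℕ) (hn1 : 0 < n1) (hn : n = n1 + n2)
    (lam : Fin k → ℕ) (hpos : ∀ t, 0 < lam t) (hsum : ∑ t, lam t = n)
    (hk1 : k ≠ 1)
    (hk2 : ¬ ∃ h : k = 2,
      lam (Fin.cast h.symm 0) = n1 ∧ lam (Fin.cast h.symm 1) = n2) :
    ∃ χ : Fin n → ℂ,
      -- `χ` occurs in the Jacquet module `r_{B_n}(π_λ)`:
      (∃ τ : Equiv.Perm (Fin n),
        (∀ i : Fin n, χ i = (((n : ℂ) - 1) / 2) - (((τ i : ℕ) : ℂ))) ∧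
        ∀ (i : Fin n) (h : (i : ℕ) + 1 < n),
          (τ.symm i < τ.symm ⟨(i : ℕ) + 1, h⟩ ↔
            ∀ t : Fin k, (∑ s ∈ Finset.univ.filter (· ≤ t), lam s) ≠ (i : ℕ) + 1)) ∧
      -- and no filtration of `rec(π_{n₁,n₂})` has graded pieces `ℂ(χ_1), …, ℂ(χ_n)`:
      ¬ ∃ Fil : Fin (n + 1) → Submodule ℂ (Fin n → ℂ),
          Monotone Fil ∧ Fil 0 = ⊥ ∧ Fil (Fin.last n) = ⊤ ∧
          (∀ i : Fin (n + 1), Module.finrank ℂ ↥(Fil i) = (i : ℕ)) ∧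
          (∀ (i : Fin n) (v : Fin n → ℂ), v ∈ Fil i.succ →
            (Dop n v - χ i • v ∈ Fil i.castSucc ∧ Nop n n1 v ∈ Fil i.castSucc)) := by
  have hk : 2 ≤ k := by
    rcases Nat.lt_or_ge k 2 with h | h
    · interval_cases k
      · simp at hsum
        omega
      · exact absurd rfl hk1
    · exact h
  set c := Composition.ofFn lam hpos hsum
  have hlen : c.length = k := Composition.ofFn_length lam hpos hsum
  refine ⟨_, ⟨c.reverseBlocks.symm, fun _ => rfl, fun i hi => ?_⟩,
    not_hasGradedFiltration_reverseBlocks c (hlen ▸ hk) ?_⟩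
  · simp only [Equiv.symm_symm, c.reverseBlocks_lt_succ_iff, hlen,
      ← Composition.sizeUpTo_ofFn_succ lam hpos hsum, Fin.forall_iff]
    exact Iff.rfl
  · rintro ⟨hlen2, hfirst⟩
    obtain rfl : k = 2 := hlen ▸ hlen2
    have hlam₀ : lam 0 = n1 := by
      rw [← hfirst]
      simpa [Fin.le_zero_iff, Finset.filter_eq'] using
        (Composition.sizeUpTo_ofFn_succ lam hpos hsum 0).symm
    rw [Fin.sum_univ_two] at hsum
    exact hk2 ⟨rfl, hlam₀, by simp only [Fin.cast_eq_self]; omega⟩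

/-- Let `n = n₁ + n₂` with `n₁, n₂ ≥ 1` and let `λ = (λ_1, …, λ_k)` be an
ordered partition of `n` with `λ ≠ (n)` and `λ ≠ (n₁, n₂)`.  Then there is an ordered list
of characters `χ_1 ⊗ ⋯ ⊗ χ_n` (encoded by their exponents `χ_i = (n-1)/2 - τ(i)` for a
permutation `τ` satisfying the descent condition describing the Jacquet module of `π_λ`)
such that there is NO increasing filtration `0 ⊂ Fil_1 ⊂ ⋯ ⊂ Fil_n = ℂ^n` by
Weil–Deligne subrepresentations of `ρ = rec(π_{n₁,n₂})` (i.e. subspaces stable under the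
semisimple part `D` and the monodromy `N`) with `Fil_i/Fil_{i-1} ≅ ℂ(χ_i)` for all `i`
(i.e. `dim Fil_i = i`, `D` acts on the `i`-th graded piece by the scalar `χ_i`, and `N`
acts on it by `0`). -/
theorem stmt8 (n n1 n2 k : ℕ) (hn1 : 0 < n1) (hn2 : 0 < n2) (hn : n = n1 + n2)
    (lam : Fin k → ℕ) (hpos : ∀ t, 0 < lam t) (hsum : ∑ t, lam t = n)
    (hk1 : k ≠ 1)
    (hk2 : ¬ ∃ h : k = 2,
      lam (Fin.cast h.symm 0) = n1 ∧ lam (Fin.cast h.symm 1) = n2) :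
    ∃ χ : Fin n → ℂ,
      -- `χ` occurs in the Jacquet module `r_{B_n}(π_λ)`:
      (∃ τ : Equiv.Perm (Fin n),
        (∀ i : Fin n, χ i = (((n : ℂ) - 1) / 2) - (((τ i : ℕ) : ℂ))) ∧
        ∀ (i : Fin n) (h : (i : ℕ) + 1 < n),
          (τ.symm i < τ.symm ⟨(i : ℕ) + 1, h⟩ ↔
            ∀ t : Fin k, (∑ s ∈ Finset.univ.filter (· ≤ t), lam s) ≠ (i : ℕ) + 1)) ∧
      -- and no filtration of `rec(π_{n₁,n₂})` has graded pieces `ℂ(χ_1), …, ℂ(χ_n)`: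
      ¬ ∃ Fil : Fin (n + 1) → Submodule ℂ (Fin n → ℂ),
          Monotone Fil ∧ Fil 0 = ⊥ ∧ Fil (Fin.last n) = ⊤ ∧
          (∀ i : Fin (n + 1), Module.finrank ℂ ↥(Fil i) = (i : ℕ)) ∧
          (∀ (i : Fin n) (v : Fin n → ℂ), v ∈ Fil i.succ →
            (Dop n v - χ i • v ∈ Fil i.castSucc ∧ Nop n n1 v ∈ Fil i.castSucc)) :=
  stmt8_general n n1 n2 k hn1 hn lam hpos hsum hk1 hk2
end

section
/- Let F be a CM number field with maximal totally real subfield F^+ and nontrivial automorphism c ∈ Gal(F/F^+). Let v_0 be a finite place of F^+ that splits in F, with corresponding pair of places w̃_0 ≠ w̃_0^c of F. If β ∈ O_F generates a positive power of the prime ideal of w̃_0, then the image of β/β^c in the quotient of (O_F ⊗_Z Z_p)^× by the closure of the image of O_F^× has infinite order. -/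
/-! If `β^N ≡ u·(β^c)^N` modulo arbitrarily high powers of `p`, applying `c` gives
`(β^c)^N ≡ u^c·β^N`. Since `c` induces complex conjugation under every complex embedding,
`u^c/u` has absolute value `1` everywhere and so is a root of unity; raising both congruences to
the torsion order `m` puts the same unit `U = u^m` in both, and they combine to
`β^{2Nm} ≡ (β^c)^{2Nm}` modulo every power of `p`. Hence `β^{2Nm} = (β^c)^{2Nm}`, so `β` lies in
the prime `w₀^c`, and `w₀ ⊆ w₀^c` forces `w₀ = w₀^c`. -/

open NumberField

namespace NumberField

open ComplexEmbedding InfinitePlace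

theorem ComplexEmbedding.isConj_of_finrank_eq_two {K L : Type*} [Field K] [Field L]
    [NumberField K] [NumberField L] [Algebra K L] (hdeg : Module.finrank K L = 2)
    (htr : ∀ v : InfinitePlace K, v.IsReal) (hti : ∀ w : InfinitePlace L, w.IsComplex)
    (c : L ≃ₐ[K] L) (hc : c ≠ AlgEquiv.refl) (φ : L →+* ℂ) : IsConj φ c := by
  have : Algebra.IsQuadraticExtension K L := ⟨hdeg⟩
  obtain ⟨σ, hσ⟩ := exists_isConj_of_isRamified (k := K)
    (isRamified_iff.mpr ⟨hti (InfinitePlace.mk φ), htr _⟩)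
  have hσ1 : σ ≠ 1 := (isConj_ne_one_iff hσ).mpr (isComplex_mk_iff.mp (hti (InfinitePlace.mk φ)))
  have hcard : Nat.card Gal(L/K) = 2 := hdeg ▸ IsGalois.card_aut_eq_finrank K L
  rw [Nat.card_eq_two_iff' 1] at hcard
  exact hcard.unique hσ1 hc ▸ hσ

theorem Units.pow_torsionOrder_eq_of_forall_place_eq {K : Type*} [Field K] [NumberField K]
    {u v : (𝓞 K)ˣ} (h : ∀ w : InfinitePlace K, w (u : K) = w (v : K)) :
    u ^ Units.torsionOrder K = v ^ Units.torsionOrder K := by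
  have hmem : u * v⁻¹ ∈ Units.torsion K := by
    rw [Units.mem_torsion]
    intro w
    simp [h w]
  rw [← Units.rootsOfUnity_eq_torsion, mem_rootsOfUnity, mul_pow, inv_pow] at hmem
  exact mul_inv_eq_one.mp hmem

theorem Units.mapRingHom_pow_torsionOrder_eq {K L : Type*} [Field K] [Field L] [NumberField L]
    [Algebra K L] {c : L ≃ₐ[K] L} (hc : ∀ φ : L →+* ℂ, IsConj φ c) (u : (𝓞 L)ˣ) :
    RingOfIntegers.mapRingHom (c : L ≃ₐ[K] L) (u : 𝓞 L) ^ Units.torsionOrder L =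
      (u : 𝓞 L) ^ Units.torsionOrder L := by
  have := Units.pow_torsionOrder_eq_of_forall_place_eq
    (u := Units.map (RingOfIntegers.mapRingHom (c : L ≃ₐ[K] L)).toMonoidHom u) (v := u)
    fun w => by
      rw [← norm_embedding_eq, ← norm_embedding_eq]
      simp [(hc _).eq]
  simpa using congrArg Units.val this

end NumberField

theorem Ideal.comap_eq_self_of_span_singleton_eq_pow {R : Type*} [CommRing R] (σ : R →+* R)
    {P : Ideal R} (hP : P.IsMaximal) {β : R} {e n : ℕ} (he : e ≠ 0) (hn : n ≠ 0)
    (hβ : Ideal.span {β} = P ^ e) (h : σ β ^ n = β ^ n) : P.comap σ = P := by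
  have := hP.isPrime
  have hβP : β ∈ P := Ideal.pow_le_self he (hβ ▸ Ideal.mem_span_singleton_self β)
  have hβσ : β ∈ P.comap σ :=
    hP.isPrime.mem_of_pow_mem n (h ▸ P.pow_mem_of_mem hβP n (Nat.pos_of_ne_zero hn))
  have hle : P ≤ P.comap σ :=
    (Ideal.IsPrime.pow_le_iff he).mp (hβ ▸ (Ideal.span_singleton_le_iff_mem _).mpr hβσ)
  exact (hP.eq_of_le (Ideal.comap_ne_top σ hP.ne_top) hle).symm

theorem not_isUnit_natCast {S : Type*} [CommRing S] [Algebra.IsIntegral ℤ S] [FaithfulSMul ℤ S]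
    {n : ℕ} (hn : n ≠ 1) : ¬IsUnit (n : S) := by
  rw [← map_natCast (algebraMap ℤ S), isUnit_map_iff, Int.isUnit_iff]
  omega

theorem sq_sub_sq_mem_of_sub_mul_mem {R : Type*} [CommRing R] {I : Ideal R} {P Q U : R}
    (hP : P - U * Q ∈ I) (hQ : Q - U * P ∈ I) : P ^ 2 - Q ^ 2 ∈ I := by
  rw [show P ^ 2 - Q ^ 2 = P * (P - U * Q) - Q * (Q - U * P) by ring]
  exact sub_mem (I.mul_mem_left P hP) (I.mul_mem_left Q hQ)

theorem Ideal.pow_sub_pow_mem {R : Type*} [CommRing R] {I : Ideal R} {x y : R} (h : x - y ∈ I)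
    (m : ℕ) : x ^ m - y ^ m ∈ I :=
  I.mem_of_dvd (sub_dvd_pow_sub_pow x y m) h

theorem sq_sub_sq_pow_mem_of_sub_mul_mem {R : Type*} [CommRing R] {σ : R →+* R}
    (hσ : Function.Involutive σ) {I : Ideal R} (hI : I ≤ I.comap σ) {b u : R} {m : ℕ}
    (hu : σ u ^ m = u ^ m) (h : b - u * σ b ∈ I) : (b ^ m) ^ 2 - (σ b ^ m) ^ 2 ∈ I := by
  have hσh : σ b - σ u * b ∈ I := by simpa [hσ b] using hI h
  refine sq_sub_sq_mem_of_sub_mul_mem (U := u ^ m) ?_ ?_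
  · simpa [mul_pow] using I.pow_sub_pow_mem h m
  · simpa [mul_pow, hu] using I.pow_sub_pow_mem hσh m

theorem stmt9_general (p : ℕ) [Fact p.Prime]
    (Fplus F : Type*) [Field Fplus] [Field F] [NumberField Fplus] [NumberField F]
    [Algebra Fplus F] (hdeg : Module.finrank Fplus F = 2)
    -- `F⁺` is totally real and `F` is totally imaginary (so `F` is CM):
    (htr : ∀ v : InfinitePlace Fplus, v.IsReal)
    (hti : ∀ w : InfinitePlace F, w.IsComplex)
    -- complex conjugation:
    (c : F ≃ₐ[Fplus] F) (hc : c ≠ AlgEquiv.refl)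
    (w0 : Ideal (𝓞 F)) (hw0 : w0.IsMaximal)
    (hsplit : Ideal.comap (RingOfIntegers.mapRingHom (c : F ≃ₐ[Fplus] F)) w0 ≠ w0)
    (β : 𝓞 F) (e : ℕ) (he : 0 < e) (hβ : Ideal.span {β} = w0 ^ e) :
    ∀ N : ℕ, 0 < N → ∃ k : ℕ, ∀ u : (𝓞 F)ˣ,
      β ^ N - (u : 𝓞 F) * (RingOfIntegers.mapRingHom (c : F ≃ₐ[Fplus] F) β) ^ N ∉
        Ideal.span {(p : 𝓞 F) ^ k} := by
  intro N hN
  set σ : 𝓞 F →+* 𝓞 F := RingOfIntegers.mapRingHom (c : F ≃ₐ[Fplus] F)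
  have hconj := ComplexEmbedding.isConj_of_finrank_eq_two hdeg htr hti c hc
  have hσ : Function.Involutive σ := fun x =>
    RingOfIntegers.ext (ComplexEmbedding.isConj_apply_apply (hconj (Classical.arbitrary _)) x)
  set m := Units.torsionOrder F
  have hD : ((β ^ N) ^ m) ^ 2 - (σ (β ^ N) ^ m) ^ 2 ≠ 0 := by
    refine sub_ne_zero.2 fun h => hsplit ?_
    refine Ideal.comap_eq_self_of_span_singleton_eq_pow σ hw0 he.ne' (n := N * m * 2) ?_ hβ ?_
    · exact mul_ne_zero (mul_ne_zero hN.ne' (Units.torsionOrder_ne_zero F)) two_ne_zero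
    · simpa only [map_pow, pow_mul] using h.symm
  obtain ⟨n, hn⟩ := FiniteMultiplicity.of_not_isUnit
    (not_isUnit_natCast (S := 𝓞 F) (Fact.out : p.Prime).ne_one) hD
  refine ⟨n + 1, fun u hu => hn ?_⟩
  rw [← Ideal.mem_span_singleton]
  refine sq_sub_sq_pow_mem_of_sub_mul_mem hσ ?_ (Units.mapRingHom_pow_torsionOrder_eq hconj u) ?_
  · rw [Ideal.span_singleton_le_iff_mem, Ideal.mem_comap, map_pow, map_natCast]
    exact Ideal.mem_span_singleton_self _
  · simpa only [map_pow] using hu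

/-- Let `F/F⁺` be a CM quadratic extension of number fields with complex
conjugation `c`, and let `w₀` be a prime of `F`, prime to `p`, with `w₀^c ≠ w₀` (i.e. the
place of `F⁺` below it splits in `F`).  If `β ∈ 𝓞_F` generates a positive power of `w₀`,
then the image of `β/β^c` in `(𝓞_F ⊗ ℤ_p)^× / closure(𝓞_F^×)` has infinite order; concretely,
for every `N ≥ 1` there is a `p`-adic precision `k` such that `β^N` is not congruent to
`u · (β^c)^N` modulo `p^k 𝓞_F` for any global unit `u`. -/
theorem stmt9 (p : ℕ) [Fact p.Prime]
    (Fplus F : Type*) [Field Fplus] [Field F] [NumberField Fplus] [NumberField F]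
    [Algebra Fplus F] (hdeg : Module.finrank Fplus F = 2)
    -- `F⁺` is totally real and `F` is totally imaginary (so `F` is CM):
    (htr : ∀ v : InfinitePlace Fplus, v.IsReal)
    (hti : ∀ w : InfinitePlace F, w.IsComplex)
    -- complex conjugation:
    (c : F ≃ₐ[Fplus] F) (hc : c ≠ AlgEquiv.refl) (hcc : ∀ x, c (c x) = x)
    (w0 : Ideal (𝓞 F)) (hw0 : w0.IsMaximal)
    (hsplit : Ideal.comap (RingOfIntegers.mapRingHom (c : F ≃ₐ[Fplus] F)) w0 ≠ w0)
    (hwp : (p : 𝓞 F) ∉ w0)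
    (β : 𝓞 F) (e : ℕ) (he : 0 < e) (hβ : Ideal.span {β} = w0 ^ e) :
    ∀ N : ℕ, 0 < N → ∃ k : ℕ, ∀ u : (𝓞 F)ˣ,
      β ^ N - (u : 𝓞 F) * (RingOfIntegers.mapRingHom (c : F ≃ₐ[Fplus] F) β) ^ N ∉
        Ideal.span {(p : 𝓞 F) ^ k} :=
  stmt9_general p Fplus F hdeg htr hti c hc w0 hw0 hsplit β e he hβ
end

section
/- Let p ≥ 5 be prime and a ≥ 3. For any element g of PGL_2(F_{p^a}) of order 2, there exists h ∈ PSL_2(F_{p^a}) such that the element gh, lifted to GL_2(F̄_p), has eigenvalues α, β satisfying (α/β)^i ≠ −1 for all i = 1, …, 2p − 1. -/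
/-!
For `g ∈ GL₂(K)` with determinant `d`, the products `g h` with `h ∈ SL₂(K)` realise every
trace, hence every characteristic polynomial `(X - α)(X - d/α)` with `α ∈ Kˣ`, whose eigenvalue
ratio is `α² / d`. It remains to find `α ≠ 0` with `α^{2i} + d^i ≠ 0` for `1 ≤ i ≤ 2p - 1`,
i.e. a non-root of `X · ∏ᵢ (X^{2i} + d^i)`, a polynomial of degree `1 + (2p - 1)·2p < p³ ≤ |K|`.
-/

open Polynomial Matrix

theorem Finset.sum_Icc_one_two_mul (n : ℕ) : ∑ i ∈ Finset.Icc 1 n, 2 * i = n * (n + 1) := by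
  induction n with
  | zero => simp
  | succ n ih => rw [Finset.sum_Icc_succ_top (by omega), ih]; ring

theorem Matrix.charpoly_fin_two_eq_mul {R : Type*} [CommRing R] [Nontrivial R]
    {M : Matrix (Fin 2) (Fin 2) R} {α β : R} (htr : M.trace = α + β) (hdet : M.det = α * β) :
    M.charpoly = (X - C α) * (X - C β) := by
  rw [charpoly_fin_two, htr, hdet, C_add, C_mul]
  ring

theorem Matrix.exists_specialLinearGroup_trace_mul_eq {K : Type*} [Field K]
    {G : Matrix (Fin 2) (Fin 2) K} (hG : G.det ≠ 0) (t : K) :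
    ∃ h : SpecialLinearGroup (Fin 2) K, (G * (h : Matrix (Fin 2) (Fin 2) K)).trace = t := by
  have trace_mul : ∀ A : Matrix (Fin 2) (Fin 2) K,
      (G * A).trace = G 0 0 * A 0 0 + G 0 1 * A 1 0 + G 1 0 * A 0 1 + G 1 1 * A 1 1 := by
    intro A
    simp only [trace_fin_two, mul_apply, Fin.sum_univ_two]
    ring
  by_cases h01 : G 0 1 = 0
  · by_cases h10 : G 1 0 = 0
    · have h00 : G 0 0 ≠ 0 := fun h00 => hG (by simp [det_fin_two, h00, h01])
      refine ⟨⟨!![t / G 0 0, 1; -1, 0], by simp [det_fin_two_of]⟩, ?_⟩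
      simp [trace_mul, h01, h10, mul_div_cancel₀ _ h00]
    · refine ⟨⟨!![1, (t - G.trace) / G 1 0; 0, 1], by simp [det_fin_two_of]⟩, ?_⟩
      simp [trace_mul, trace_fin_two, h01, mul_div_cancel₀ _ h10]
      ring
  · refine ⟨⟨!![1, 0; (t - G.trace) / G 0 1, 1], by simp [det_fin_two_of]⟩, ?_⟩
    simp [trace_mul, trace_fin_two, mul_div_cancel₀ _ h01]
    ring

theorem exists_ne_zero_forall_sq_div_pow_ne_neg_one {K : Type*} [Field K] [Fintype K]
    {d : K} (hd : d ≠ 0) {n : ℕ} (hn : 1 + n * (n + 1) < Fintype.card K) :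
    ∃ α : K, α ≠ 0 ∧ ∀ i, 1 ≤ i → i ≤ n → (α ^ 2 / d) ^ i ≠ -1 := by
  set P : K[X] := X * ∏ i ∈ Finset.Icc 1 n, (X ^ (2 * i) + C (d ^ i))
  have hmonic : ∀ i ∈ Finset.Icc 1 n, (X ^ (2 * i) + C (d ^ i)).Monic := fun i hi =>
    monic_X_pow_add_C _ (by have := (Finset.mem_Icc.mp hi).1; omega)
  have hdeg : P.natDegree = 1 + n * (n + 1) := by
    rw [monic_X.natDegree_mul (monic_prod_of_monic _ _ hmonic), natDegree_X,
      natDegree_prod_of_monic _ _ hmonic]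
    simp only [natDegree_X_pow_add_C, Finset.sum_Icc_one_two_mul]
  obtain ⟨α, hα⟩ := P.exists_eval_ne_zero_of_natDegree_lt_card
    (monic_X.mul (monic_prod_of_monic _ _ hmonic)).ne_zero
    (by rw [hdeg, Cardinal.mk_fintype]; exact_mod_cast hn)
  simp only [P, eval_mul, eval_X, eval_prod, eval_add, eval_pow, eval_C, mul_ne_zero_iff,
    Finset.prod_ne_zero_iff, Finset.mem_Icc] at hα
  refine ⟨α, hα.1, fun i hi1 hi2 hneg => hα.2 i ⟨hi1, hi2⟩ ?_⟩
  rw [div_pow, div_eq_iff (pow_ne_zero _ hd)] at hneg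
  rw [pow_mul, hneg]
  ring

theorem stmt11_general (p a : ℕ) (hp : 5 ≤ p) (ha : 3 ≤ a)
    (K : Type*) [Field K] [Fintype K] (hK : Fintype.card K = p ^ a)
    (g : GL (Fin 2) K) :
    ∃ h : Matrix.SpecialLinearGroup (Fin 2) K,
      ∃ α β : AlgebraicClosure K,
        (((g : Matrix (Fin 2) (Fin 2) K) * (h : Matrix (Fin 2) (Fin 2) K)).map
            (algebraMap K (AlgebraicClosure K))).charpoly =
          (Polynomial.X - Polynomial.C α) * (Polynomial.X - Polynomial.C β) ∧
        ∀ i : ℕ, 1 ≤ i → i ≤ 2 * p - 1 → (α / β) ^ i ≠ -1 := by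
  set d := (g : Matrix (Fin 2) (Fin 2) K).det
  have hd : d ≠ 0 := g.isUnit.map detMonoidHom |>.ne_zero
  have hcard : 1 + (2 * p - 1) * (2 * p - 1 + 1) < Fintype.card K := by
    obtain ⟨k, rfl⟩ : ∃ k, p = k + 5 := ⟨p - 5, by omega⟩
    calc 1 + (2 * (k + 5) - 1) * (2 * (k + 5) - 1 + 1) = 1 + (2 * k + 9) * (2 * k + 10) := by
          rw [show 2 * (k + 5) - 1 = 2 * k + 9 by omega]
      _ < (k + 5) ^ 3 := by ring_nf; nlinarith [sq_nonneg k]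
      _ ≤ Fintype.card K := hK ▸ Nat.pow_le_pow_right (by omega) ha
  obtain ⟨α, hα0, hα⟩ := exists_ne_zero_forall_sq_div_pow_ne_neg_one hd hcard
  obtain ⟨h, htr⟩ := exists_specialLinearGroup_trace_mul_eq hd (α + d / α)
  have hdet : ((g : Matrix (Fin 2) (Fin 2) K) * h).det = α * (d / α) := by
    rw [det_mul, Matrix.SpecialLinearGroup.det_coe, mul_one, mul_div_cancel₀ _ hα0]
  set φ := algebraMap K (AlgebraicClosure K)
  refine ⟨h, φ α, φ (d / α), ?_, fun i hi1 hi2 => ?_⟩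
  · rw [charpoly_map, charpoly_fin_two_eq_mul htr hdet]
    simp
  · rw [← map_div₀, ← map_pow, ← map_one φ, ← map_neg, φ.injective.ne_iff,
      div_div_eq_mul_div, ← sq]
    exact hα i hi1 hi2

/-- Let `p ≥ 5` be prime, `a ≥ 3`, and `K` a field with `p^a` elements.
For any element `g` of `PGL₂(K)` of order 2 (encoded as `g ∈ GL₂(K)` which is non-scalar
with `g²` scalar), there exists `h ∈ SL₂(K)` (whose class lies in `PSL₂(K)`) such that the
matrix `g·h`, viewed over the algebraic closure `K̄`, has eigenvalues `α, β` satisfying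
`(α/β)^i ≠ -1` for all `i = 1, …, 2p-1`. -/
theorem stmt11 (p a : ℕ) [Fact p.Prime] (hp : 5 ≤ p) (ha : 3 ≤ a)
    (K : Type*) [Field K] [Fintype K] [DecidableEq K] (hK : Fintype.card K = p ^ a)
    (g : GL (Fin 2) K)
    (hg_nonscalar : ∀ c : K, (g : Matrix (Fin 2) (Fin 2) K) ≠ c • (1 : Matrix (Fin 2) (Fin 2) K))
    (hg_sq_scalar : ∃ c : K, (g : Matrix (Fin 2) (Fin 2) K) ^ 2 = c • (1 : Matrix (Fin 2) (Fin 2) K)) :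
    ∃ h : Matrix.SpecialLinearGroup (Fin 2) K,
      ∃ α β : AlgebraicClosure K,
        (((g : Matrix (Fin 2) (Fin 2) K) * (h : Matrix (Fin 2) (Fin 2) K)).map
            (algebraMap K (AlgebraicClosure K))).charpoly =
          (Polynomial.X - Polynomial.C α) * (Polynomial.X - Polynomial.C β) ∧
        ∀ i : ℕ, 1 ≤ i → i ≤ 2 * p - 1 → (α / β) ^ i ≠ -1 :=
  stmt11_general p a hp ha K hK g
end
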